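/- arXiv:1902.09994 — 2 statements merged into one kernel-verified Lean document; each statement's English description precedes it below -/
import Mathlib

section
/- For |y t²| < 1, the generating function ẽ_{q²}(-y t²) · Ẽ_{q,α}(x t) = ∑_{n=0}^∞ q^{n(n-1)/2} t^n h̃_{n,α}(x,y|q) / (q;q)_n holds, where Ẽ_{q,α}(z) = ∑_{k≥0} q^{k(k-1)/2} z^k/(q;q)_{k,α} and ẽ_{q²}(z) = ∑_{k≥0} z^k/(q²;q²)_k. -/
open Finset

/-- q-shifted factorial (a;Q)_n with base Q -/
noncomputable def qPochGen (Q a : ℝ) (n : ℕ) : ℝ := ∏ j ∈ Finset.range n, (1 - a * Q ^ j)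

/-- (q;q)_n -/
noncomputable def qPoch (q : ℝ) (n : ℕ) : ℝ := qPochGen q q n

/-- generalized q-shifted factorial (q;q)_{n,α}, via splitting formulas -/
noncomputable def gqPoch (q α : ℝ) (n : ℕ) : ℝ :=
  qPochGen (q ^ 2) (q ^ 2) (n / 2) * qPochGen (q ^ 2) (Real.rpow q (2 * α + 2)) (n / 2 + n % 2)

/-- generalized discrete q-Hermite II polynomials -/
noncomputable def hTilde (q α x y : ℝ) (n : ℕ) : ℝ :=
  qPoch q n * ∑ k ∈ Finset.range (n / 2 + 1),
    (-1 : ℝ) ^ k * q ^ (-2 * (n : ℤ) * (k : ℤ) + (k : ℤ) * (2 * (k : ℤ) + 1)) *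
      x ^ (n - 2 * k) * y ^ k / (gqPoch q α (n - 2 * k) * qPoch (q ^ 2) k)

lemma qPochGen_pos {Q a : ℝ} (ha0 : 0 ≤ a) (ha1 : a < 1) (hQ0 : 0 ≤ Q) (hQ1 : Q ≤ 1)
    (n : ℕ) : 0 < qPochGen Q a n := by
  refine Finset.prod_pos fun j _ => ?_
  have h1 : a * Q ^ j ≤ a * 1 := by
    have : Q ^ j ≤ 1 := pow_le_one₀ hQ0 hQ1
    exact mul_le_mul_of_nonneg_left this ha0
  nlinarith

lemma qPochGen_ge {Q a A : ℝ} (ha0 : 0 ≤ a) (haA : a ≤ A) (hA1 : A ≤ 1)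
    (hQ0 : 0 ≤ Q) (hQ1 : Q ≤ 1) (n : ℕ) : (1 - A) ^ n ≤ qPochGen Q a n := by
  have h : (1 - A) ^ n = ∏ _j ∈ Finset.range n, (1 - A) := by
    rw [Finset.prod_const, Finset.card_range]
  rw [h, qPochGen]
  refine Finset.prod_le_prod (fun j _ => by linarith) fun j _ => ?_
  have h1 : a * Q ^ j ≤ a * 1 := by
    have : Q ^ j ≤ 1 := pow_le_one₀ hQ0 hQ1
    exact mul_le_mul_of_nonneg_left this ha0
  nlinarith

lemma tri_exact (n : ℕ) : 2 * (n * (n - 1) / 2) = n * (n - 1) := by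
  refine Nat.mul_div_cancel' (Even.two_dvd ?_)
  rcases Nat.even_or_odd n with h | h
  · exact h.mul_right _
  · have : Even (n - 1) := Nat.Odd.sub_odd h odd_one
    exact this.mul_left _

lemma cast_tri (n : ℕ) : (2 : ℤ) * (↑(n * (n - 1) / 2) : ℤ) = (n : ℤ) * ((n : ℤ) - 1) := by
  cases n with
  | zero => simp
  | succ m =>
    have h := tri_exact (m + 1)
    have h' : ((2 * ((m + 1) * (m + 1 - 1) / 2) : ℕ) : ℤ) = (((m + 1) * (m + 1 - 1) : ℕ) : ℤ) := by
      exact congrArg (fun z : ℕ => (z : ℤ)) h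
    push_cast [Nat.succ_sub_one] at h' ⊢
    linarith

lemma intid (n k : ℕ) (h : 2 * k ≤ n) :
    ((n * (n - 1) / 2 : ℕ) : ℤ) + (-2 * (n : ℤ) * (k : ℤ) + (k : ℤ) * (2 * (k : ℤ) + 1)) =
      (((n - 2 * k) * (n - 2 * k - 1) / 2 : ℕ) : ℤ) := by
  have hm : ((n - 2 * k : ℕ) : ℤ) = (n : ℤ) - 2 * k := by
    push_cast [Nat.cast_sub h]; ring
  have hA := cast_tri n
  have hB := cast_tri (n - 2 * k)
  rw [hm] at hB
  apply mul_left_cancel₀ (two_ne_zero (α := ℤ))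
  rw [mul_add, hA, hB]
  ring

lemma tri_succ (m : ℕ) : (m + 1) * (m + 1 - 1) / 2 = m * (m - 1) / 2 + m := by
  have h : (m + 1) * (m + 1 - 1) = m * (m - 1) + 2 * m := by
    cases m with
    | zero => rfl
    | succ j => simp only [Nat.succ_sub_one]; ring
  rw [h, Nat.add_mul_div_left _ _ (by norm_num : 0 < 2)]

theorem hTilde_generating_function (q α x y t : ℝ) (hq : 0 < q) (hq1 : q < 1)
    (hα : -1 < α) (hyt : |y * t ^ 2| < 1) :
    (∑' k : ℕ, (-(y * t ^ 2)) ^ k / qPoch (q ^ 2) k) *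
        (∑' k : ℕ, q ^ (k * (k - 1) / 2) * (x * t) ^ k / gqPoch q α k) =
      ∑' n : ℕ, q ^ (n * (n - 1) / 2) * t ^ n * hTilde q α x y n / qPoch q n := by
  -- basic positivity facts
  have hq2_0 : (0:ℝ) ≤ q ^ 2 := by positivity
  have hq2_1 : q ^ 2 < 1 := by nlinarith
  have hrpow0 : 0 < Real.rpow q (2 * α + 2) := Real.rpow_pos_of_pos hq _
  have hrpow1 : Real.rpow q (2 * α + 2) < 1 := Real.rpow_lt_one hq.le hq1 (by linarith)
  set A : ℝ := max (q ^ 2) (Real.rpow q (2 * α + 2)) with hAdef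
  have hA0 : 0 ≤ A := le_trans hq2_0 (le_max_left _ _)
  have hA1 : A < 1 := max_lt hq2_1 hrpow1
  have hP2pos : ∀ k : ℕ, 0 < qPoch (q ^ 2) k := fun k =>
    qPochGen_pos hq2_0 hq2_1 hq2_0 hq2_1.le k
  have hGpos : ∀ m : ℕ, 0 < gqPoch q α m := fun m =>
    mul_pos (qPochGen_pos hq2_0 hq2_1 hq2_0 hq2_1.le _)
      (qPochGen_pos hrpow0.le hrpow1 hq2_0 hq2_1.le _)
  have hGge : ∀ m : ℕ, (1 - A) ^ m ≤ gqPoch q α m := by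
    intro m
    have h1 : (1 - A) ^ (m / 2) ≤ qPochGen (q ^ 2) (q ^ 2) (m / 2) :=
      qPochGen_ge hq2_0 (le_max_left _ _) hA1.le hq2_0 hq2_1.le _
    have h2 : (1 - A) ^ (m / 2 + m % 2) ≤
        qPochGen (q ^ 2) (Real.rpow q (2 * α + 2)) (m / 2 + m % 2) :=
      qPochGen_ge hrpow0.le (le_max_right _ _) hA1.le hq2_0 hq2_1.le _
    have hsplit : m / 2 + (m / 2 + m % 2) = m := by omega
    calc (1 - A) ^ m = (1 - A) ^ (m / 2) * (1 - A) ^ (m / 2 + m % 2) := by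
          rw [← pow_add, hsplit]
      _ ≤ _ :=
          mul_le_mul h1 h2 (pow_nonneg (by linarith) _)
            (le_of_lt (qPochGen_pos hq2_0 hq2_1 hq2_0 hq2_1.le _))
  -- the two factor sequences
  set a : ℕ → ℝ := fun k => (-(y * t ^ 2)) ^ k / qPoch (q ^ 2) k with hadef
  set b : ℕ → ℝ := fun k => q ^ (k * (k - 1) / 2) * (x * t) ^ k / gqPoch q α k with hbdef
  have hna : ∀ j : ℕ, ‖a j‖ = |y * t ^ 2| ^ j / qPoch (q ^ 2) j := by
    intro j
    simp only [hadef]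
    rw [Real.norm_eq_abs, abs_div, abs_pow, abs_neg, abs_of_pos (hP2pos j)]
  have hnb : ∀ j : ℕ, ‖b j‖ = q ^ (j * (j - 1) / 2) * |x * t| ^ j / gqPoch q α j := by
    intro j
    simp only [hbdef]
    rw [Real.norm_eq_abs, abs_div, abs_of_pos (hGpos j), abs_mul, abs_pow, abs_pow,
      abs_of_pos hq]
  -- summability of norms of `a` by the ratio test
  have hanorm : Summable fun k => ‖a k‖ := by
    set L : ℝ := (1 + |y * t ^ 2|) / 2 with hLdef
    have hyt0 : 0 ≤ |y * t ^ 2| := abs_nonneg _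
    have hL1 : L < 1 := by rw [hLdef]; linarith
    have hLpos : 0 < L := by rw [hLdef]; linarith
    apply summable_of_ratio_norm_eventually_le hL1
    simp only [Real.norm_eq_abs] at hna
    have htend : Filter.Tendsto (fun k : ℕ => (q ^ 2) ^ (k + 1)) Filter.atTop (nhds 0) := by
      have h0 := tendsto_pow_atTop_nhds_zero_of_lt_one hq2_0 hq2_1
      exact h0.comp (Filter.tendsto_add_atTop_nat 1)
    have hylt : |y * t ^ 2| / L < 1 := by
      rw [div_lt_one hLpos, hLdef]; linarith
    have hev : ∀ᶠ k : ℕ in Filter.atTop, (q ^ 2) ^ (k + 1) < 1 - |y * t ^ 2| / L :=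
      htend.eventually_lt_const (by linarith)
    filter_upwards [hev] with k hk
    have hPk := hP2pos k
    have hPk1 := hP2pos (k + 1)
    have hstep : qPoch (q ^ 2) (k + 1) = qPoch (q ^ 2) k * (1 - q ^ 2 * (q ^ 2) ^ k) := by
      simp [qPoch, qPochGen, Finset.prod_range_succ]
    have hpow : q ^ 2 * (q ^ 2) ^ k = (q ^ 2) ^ (k + 1) := by ring
    have hfacpos : 0 < 1 - q ^ 2 * (q ^ 2) ^ k := by
      have hy0 : 0 ≤ |y * t ^ 2| / L := by positivity
      rw [hpow]; linarith
    simp only [Real.norm_eq_abs, abs_abs]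
    rw [hna, hna, hstep]
    rw [div_le_iff₀ (by positivity), pow_succ]
    have key : |y * t ^ 2| ≤ L * (1 - q ^ 2 * (q ^ 2) ^ k) := by
      have h1 : |y * t ^ 2| / L ≤ 1 - q ^ 2 * (q ^ 2) ^ k := by rw [hpow]; linarith
      calc |y * t ^ 2| = L * (|y * t ^ 2| / L) := by field_simp
        _ ≤ L * (1 - q ^ 2 * (q ^ 2) ^ k) := mul_le_mul_of_nonneg_left h1 hLpos.le
    calc |y * t ^ 2| ^ k * |y * t ^ 2|
        ≤ |y * t ^ 2| ^ k * (L * (1 - q ^ 2 * (q ^ 2) ^ k)) :=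
          mul_le_mul_of_nonneg_left key (by positivity)
      _ = L * (|y * t ^ 2| ^ k / qPoch (q ^ 2) k) * (qPoch (q ^ 2) k * (1 - q ^ 2 * (q ^ 2) ^ k)) := by
          field_simp
  -- summability of norms of `b` by comparison with a super-geometric series
  have hbnorm : Summable fun m => ‖b m‖ := by
    set r : ℝ := |x * t| / (1 - A) with hrdef
    have hr0 : 0 ≤ r := div_nonneg (abs_nonneg _) (by linarith)
    set g : ℕ → ℝ := fun m => q ^ (m * (m - 1) / 2) * r ^ m with hgdef
    have hg0 : ∀ m, 0 ≤ g m := by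
      intro m; simp only [hgdef]; positivity
    have hgsum : Summable g := by
      apply summable_of_ratio_norm_eventually_le (by norm_num : (1:ℝ)/2 < 1)
      have htend : Filter.Tendsto (fun m : ℕ => q ^ m * r) Filter.atTop (nhds (0 * r)) :=
        (tendsto_pow_atTop_nhds_zero_of_lt_one hq.le hq1).mul_const r
      rw [zero_mul] at htend
      have hev : ∀ᶠ m : ℕ in Filter.atTop, q ^ m * r < 1/2 :=
        htend.eventually_lt_const (by norm_num)
      filter_upwards [hev] with m hm
      have h1 : g (m + 1) = (q ^ m * r) * g m := by
        simp only [hgdef]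
        rw [tri_succ, pow_add, pow_succ]
        ring
      rw [Real.norm_eq_abs, Real.norm_eq_abs, abs_of_nonneg (hg0 _), abs_of_nonneg (hg0 _), h1]
      have h2 : 0 ≤ q ^ m * r := by positivity
      nlinarith [hg0 m]
    apply Summable.of_nonneg_of_le (fun m => norm_nonneg _) _ hgsum
    intro m
    have hG := hGpos m
    have hGA := hGge m
    have h1A : (0:ℝ) < (1 - A) ^ m := pow_pos (by linarith) m
    rw [hnb m]
    simp only [hgdef]
    rw [hrdef, div_pow, mul_div_assoc]
    exact mul_le_mul_of_nonneg_left
      (div_le_div_of_nonneg_left (by positivity) h1A hGA) (by positivity)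
  have ha : Summable a := hanorm.of_norm
  have hb : Summable b := hbnorm.of_norm
  -- reindex via the injection (k, m) ↦ (2k + m, k)
  set F : ℕ × ℕ → ℝ := fun w => if 2 * w.2 ≤ w.1 then a w.2 * b (w.1 - 2 * w.2) else 0
    with hFdef
  set i : ℕ × ℕ → ℕ × ℕ := fun p => (2 * p.1 + p.2, p.1) with hidef
  have hi : Function.Injective i := by
    intro p p' h
    simp only [hidef, Prod.mk.injEq] at h
    obtain ⟨h1, h2⟩ := h
    exact Prod.ext h2 (by omega)
  have hFi : ∀ p : ℕ × ℕ, F (i p) = a p.1 * b p.2 := by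
    intro p
    show (if 2 * p.1 ≤ 2 * p.1 + p.2 then a p.1 * b (2 * p.1 + p.2 - 2 * p.1) else 0)
      = a p.1 * b p.2
    rw [if_pos (by omega)]
    have harg : 2 * p.1 + p.2 - 2 * p.1 = p.2 := by omega
    rw [harg]
  have hsupp : Function.support F ⊆ Set.range i := by
    intro w hw
    have hw' : F w ≠ 0 := hw
    by_cases h : 2 * w.2 ≤ w.1
    · refine ⟨(w.2, w.1 - 2 * w.2), ?_⟩
      show (2 * w.2 + (w.1 - 2 * w.2), w.2) = w
      have : 2 * w.2 + (w.1 - 2 * w.2) = w.1 := by omega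
      rw [this]
    · exact absurd (if_neg h) hw'
  have hFcomp : (fun p : ℕ × ℕ => a p.1 * b p.2) = F ∘ i := by
    funext p; exact (hFi p).symm
  have habsum : Summable fun z : ℕ × ℕ => a z.1 * b z.2 :=
    summable_mul_of_summable_norm hanorm hbnorm
  have hFsum : Summable F := by
    rw [← hi.summable_iff (fun w hw => by
      by_contra hne
      exact hw (hsupp hne))]
    rw [← hFcomp]
    exact habsum
  have step1 : (∑' k : ℕ, a k) * (∑' k : ℕ, b k) = ∑' z : ℕ × ℕ, a z.1 * b z.2 :=
    tsum_mul_tsum_of_summable_norm hanorm hbnorm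
  have step2 : ∑' z : ℕ × ℕ, a z.1 * b z.2 = ∑' w : ℕ × ℕ, F w := by
    rw [hFcomp]
    exact hi.tsum_eq hsupp
  have step3 : ∑' w : ℕ × ℕ, F w = ∑' n : ℕ, ∑' k : ℕ, F (n, k) := Summable.tsum_prod' hFsum fun n => hFsum.prod_factor n
  refine Eq.trans (step1.trans (step2.trans step3)) ?_
  -- finish: identify each fiber sum with the coefficient
  apply tsum_congr
  intro n
  have hz : ∀ k ∉ Finset.range (n / 2 + 1), F (n, k) = 0 := by
    intro k hk
    rw [Finset.mem_range] at hk
    show (if 2 * k ≤ n then a k * b (n - 2 * k) else 0) = 0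
    rw [if_neg (by omega)]
  rw [tsum_eq_sum hz]
  have hPn : qPoch q n ≠ 0 :=
    ne_of_gt (qPochGen_pos hq.le hq1 hq.le hq1.le n)
  have hcoef : q ^ (n * (n - 1) / 2) * t ^ n * hTilde q α x y n / qPoch q n
      = q ^ (n * (n - 1) / 2) * t ^ n *
        ∑ k ∈ Finset.range (n / 2 + 1),
          (-1 : ℝ) ^ k * q ^ (-2 * (n : ℤ) * (k : ℤ) + (k : ℤ) * (2 * (k : ℤ) + 1)) *
            x ^ (n - 2 * k) * y ^ k / (gqPoch q α (n - 2 * k) * qPoch (q ^ 2) k) := by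
    rw [hTilde]
    field_simp
  rw [hcoef, Finset.mul_sum]
  apply Finset.sum_congr rfl
  intro k hk
  rw [Finset.mem_range] at hk
  have h2k : 2 * k ≤ n := by omega
  have hFk : F (n, k) = a k * b (n - 2 * k) := by
    show (if 2 * k ≤ n then a k * b (n - 2 * k) else 0) = _
    rw [if_pos h2k]
  rw [hFk]
  have hqn : (q : ℝ) ^ (n * (n - 1) / 2) ≠ 0 := by positivity
  have hqe : (q : ℝ) ^ (-2 * (n : ℤ) * (k : ℤ) + (k : ℤ) * (2 * (k : ℤ) + 1)) =
      q ^ ((n - 2 * k) * (n - 2 * k - 1) / 2) / q ^ (n * (n - 1) / 2) := by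
    rw [eq_div_iff hqn]
    rw [← zpow_natCast q ((n - 2 * k) * (n - 2 * k - 1) / 2),
      ← zpow_natCast q (n * (n - 1) / 2), ← zpow_add₀ hq.ne']
    congr 1
    have h := intid n k h2k
    linarith
  have ht : t ^ n = t ^ (2 * k) * t ^ (n - 2 * k) := by
    rw [← pow_add]; congr 1; omega
  have h1 : (-(y * t ^ 2)) ^ k = (-1 : ℝ) ^ k * y ^ k * t ^ (2 * k) := by
    rw [neg_eq_neg_one_mul, mul_pow, mul_pow, ← pow_mul]
    ring
  have h2 : (x * t) ^ (n - 2 * k) = x ^ (n - 2 * k) * t ^ (n - 2 * k) :=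
    mul_pow x t (n - 2 * k)
  have hGm : gqPoch q α (n - 2 * k) ≠ 0 := ne_of_gt (hGpos (n - 2 * k))
  have hP2k : qPoch (q ^ 2) k ≠ 0 := ne_of_gt (hP2pos k)
  simp only [hadef, hbdef]
  rw [hqe, ht, h1, h2]
  field_simp
end

section
/- In the limit q → 1⁻, the rescaled discrete q-Hermite II case satisfies lim_{q→1⁻} h̃_{n,-1/2}(√(1-q²)·x, 1 | q)/(1-q²)^{n/2} = H_n(x)/2^n, where H_n is the classical Hermite polynomial H_n(x) = n! ∑_{k=0}^{⌊n/2⌋} (-1)^k (2x)^{n-2k}/(k!(n-2k)!). -/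
open Finset

/-- physicists' Hermite polynomial -/
noncomputable def hermitePoly (n : ℕ) (x : ℝ) : ℝ :=
  (n.factorial : ℝ) * ∑ k ∈ Finset.range (n / 2 + 1),
    (-1 : ℝ) ^ k * (2 * x) ^ (n - 2 * k) / ((k.factorial : ℝ) * ((n - 2 * k).factorial : ℝ))

noncomputable def G (m : ℕ) (q : ℝ) : ℝ := ∑ i ∈ Finset.range m, q ^ i

lemma one_sub_pow (q : ℝ) (m : ℕ) : 1 - q ^ m = (1 - q) * G m q := by
  unfold G; linear_combination geom_sum_mul q m

lemma G_pos {q : ℝ} (hq : 0 < q) {m : ℕ} (hm : 0 < m) : 0 < G m q := by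
  unfold G
  exact Finset.sum_pos (fun i _ => pow_pos hq i) (Finset.nonempty_range_iff.mpr hm.ne')

lemma G_one (m : ℕ) : G m 1 = m := by simp [G]

lemma G_cont (m : ℕ) : Continuous (G m) := by
  unfold G; exact continuous_finset_sum _ (fun i _ => continuous_pow i)

lemma qPoch_pos {q : ℝ} (hq0 : 0 ≤ q) (hq1 : q < 1) (m : ℕ) : 0 < qPoch q m := by
  unfold qPoch qPochGen
  refine Finset.prod_pos fun j _ => ?_
  have h1 : q * q ^ j = q ^ (j + 1) := by ring
  rw [h1]
  have := pow_lt_one₀ hq0 hq1 (show j + 1 ≠ 0 by omega)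
  linarith



lemma gqPoch_neg_half (q : ℝ) (m : ℕ) : gqPoch q (-1/2) m = qPoch q m := by
  have h1 : Real.rpow q (2 * (-1/2) + 2) = q := by
    norm_num
  rw [gqPoch, h1]
  induction m with
  | zero => simp [qPochGen, qPoch]
  | succ m ih =>
    rcases Nat.even_or_odd m with ⟨s, hs⟩ | ⟨s, hs⟩
    · have h4 : m / 2 = s := by omega
      have h5 : m % 2 = 0 := by omega
      have h2 : (m+1) / 2 = s := by omega
      have h3 : (m+1) % 2 = 1 := by omega
      rw [h4, h5] at ih
      rw [h2, h3]
      have e1 : qPochGen (q^2) q (s+1) = qPochGen (q^2) q s * (1 - q * (q^2)^s) := by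
        simp [qPochGen, Finset.prod_range_succ]
      have e2 : qPoch q (m+1) = qPoch q m * (1 - q * q^m) := by
        simp [qPoch, qPochGen, Finset.prod_range_succ]
      rw [e1, e2, ← ih]
      have : q * (q^2)^s = q * q^m := by
        rw [← pow_mul, hs]; ring_nf
      rw [show s + 0 = s by omega] at ih ⊢
      rw [this]; ring
    · have h4 : m / 2 = s := by omega
      have h5 : m % 2 = 1 := by omega
      have h2 : (m+1) / 2 = s + 1 := by omega
      have h3 : (m+1) % 2 = 0 := by omega
      rw [h4, h5] at ih
      rw [h2, h3]
      have e1 : qPochGen (q^2) (q^2) (s+1) = qPochGen (q^2) (q^2) s * (1 - q^2 * (q^2)^s) := by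
        simp [qPochGen, Finset.prod_range_succ]
      have e2 : qPoch q (m+1) = qPoch q m * (1 - q * q^m) := by
        simp [qPoch, qPochGen, Finset.prod_range_succ]
      rw [e1, e2, ← ih]
      have : q^2 * (q^2)^s = q * q^m := by
        rw [← pow_succ', ← pow_mul, hs]; ring_nf
      rw [show s + 1 + 0 = s + 1 by omega]
      rw [this]; ring





noncomputable def Fq (n : ℕ) (x q : ℝ) : ℝ :=
  ∑ k ∈ Finset.range (n / 2 + 1),
    (-1 : ℝ) ^ k * q ^ (-2 * (n : ℤ) * (k : ℤ) + (k : ℤ) * (2 * (k : ℤ) + 1)) * x ^ (n - 2 * k) *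
      ((∏ j ∈ Finset.range (2 * k), G (n - 2 * k + 1 + j) q) /
       ((∏ j ∈ Finset.range k, G (2 * j + 2) q) * (G 2 q) ^ k))

lemma qPoch_split (q : ℝ) {n k : ℕ} (hk : 2 * k ≤ n) :
    qPoch q n = qPoch q (n - 2 * k) *
      ((1 - q) ^ (2 * k) * ∏ j ∈ Finset.range (2 * k), G (n - 2 * k + 1 + j) q) := by
  have h : n = (n - 2 * k) + 2 * k := by omega
  calc qPoch q n = ∏ j ∈ Finset.range ((n - 2 * k) + 2 * k), (1 - q * q ^ j) := by
        rw [show (n - 2 * k) + 2 * k = n from by omega, qPoch, qPochGen]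
    _ = (∏ j ∈ Finset.range (n - 2 * k), (1 - q * q ^ j)) *
        ∏ j ∈ Finset.range (2 * k), (1 - q * q ^ (n - 2 * k + j)) := Finset.prod_range_add _ _ _
    _ = qPoch q (n - 2 * k) *
        ((1 - q) ^ (2 * k) * ∏ j ∈ Finset.range (2 * k), G (n - 2 * k + 1 + j) q) := by
        rw [qPoch, qPochGen]
        congr 1
        calc (∏ j ∈ Finset.range (2 * k), (1 - q * q ^ (n - 2 * k + j)))
            = ∏ j ∈ Finset.range (2 * k), ((1 - q) * G (n - 2 * k + 1 + j) q) := by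
              refine Finset.prod_congr rfl fun j _ => ?_
              rw [← one_sub_pow]
              congr 1
              rw [show n - 2 * k + 1 + j = (n - 2 * k + j) + 1 by omega, pow_succ]
              ring
          _ = (1 - q) ^ (2 * k) * ∏ j ∈ Finset.range (2 * k), G (n - 2 * k + 1 + j) q := by
              rw [Finset.prod_mul_distrib, Finset.prod_const, Finset.card_range]

lemma qPoch_sq (q : ℝ) (k : ℕ) :
    qPoch (q ^ 2) k = (1 - q) ^ k * ∏ j ∈ Finset.range k, G (2 * j + 2) q := by
  rw [qPoch, qPochGen]
  calc (∏ j ∈ Finset.range k, (1 - q ^ 2 * (q ^ 2) ^ j))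
      = ∏ j ∈ Finset.range k, ((1 - q) * G (2 * j + 2) q) := by
        refine Finset.prod_congr rfl fun j _ => ?_
        rw [← one_sub_pow]
        congr 1
        rw [show 2 * j + 2 = 2 * (j + 1) by omega, pow_mul, pow_succ]
        ring
    _ = _ := by rw [Finset.prod_mul_distrib, Finset.prod_const, Finset.card_range]

lemma key (q : ℝ) (hq0 : 0 < q) (hq1 : q < 1) (n k : ℕ) (hk : 2 * k ≤ n) :
    qPoch q n * Real.sqrt (1 - q ^ 2) ^ (n - 2 * k) /
      (qPoch q (n - 2 * k) * qPoch (q ^ 2) k) / (1 - q ^ 2) ^ ((n : ℝ) / 2)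
    = (∏ j ∈ Finset.range (2 * k), G (n - 2 * k + 1 + j) q) /
      ((∏ j ∈ Finset.range k, G (2 * j + 2) q) * (G 2 q) ^ k) := by
  have hA : (0 : ℝ) < 1 - q ^ 2 := by nlinarith
  set A : ℝ := 1 - q ^ 2 with hAdef
  have e1 : Real.sqrt A ^ (n - 2 * k) = A ^ ((((n : ℝ) - 2 * k)) / 2) := by
    rw [Real.sqrt_eq_rpow, ← Real.rpow_natCast (A ^ ((1:ℝ)/2)) (n - 2*k),
      ← Real.rpow_mul hA.le]
    congr 1
    rw [Nat.cast_sub hk]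
    push_cast
    ring
  have e2 : A ^ ((((n : ℝ) - 2 * k)) / 2) / A ^ ((n : ℝ) / 2) = (A ^ k)⁻¹ := by
    rw [← Real.rpow_sub hA]
    rw [show ((n : ℝ) - 2 * k) / 2 - (n : ℝ) / 2 = -(k : ℝ) by ring]
    rw [Real.rpow_neg hA.le, Real.rpow_natCast]
  have hP : qPoch q (n - 2 * k) ≠ 0 := (qPoch_pos hq0.le hq1 _).ne'
  have h1q : (1 : ℝ) - q ≠ 0 := by linarith
  have hGprod : (0 : ℝ) < ∏ j ∈ Finset.range k, G (2 * j + 2) q :=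
    Finset.prod_pos fun j _ => G_pos hq0 (by omega)
  have hG2 : (0 : ℝ) < G 2 q := G_pos hq0 (by omega)
  have hA2 : A ^ k = (1 - q) ^ k * (G 2 q) ^ k := by
    rw [hAdef, one_sub_pow, mul_pow]
  calc qPoch q n * Real.sqrt A ^ (n - 2 * k) / (qPoch q (n - 2 * k) * qPoch (q ^ 2) k) /
        A ^ ((n : ℝ) / 2)
      = qPoch q n / (qPoch q (n - 2 * k) * qPoch (q ^ 2) k) *
        (A ^ ((((n : ℝ) - 2 * k)) / 2) / A ^ ((n : ℝ) / 2)) := by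
        rw [← e1]; ring
    _ = qPoch q n / (qPoch q (n - 2 * k) * qPoch (q ^ 2) k) * (A ^ k)⁻¹ := by rw [e2]
    _ = _ := by
        rw [qPoch_split q hk, qPoch_sq, hA2]
        field_simp
        ring

lemma eq_on_Ioo (x : ℝ) (n : ℕ) {q : ℝ} (hq : q ∈ Set.Ioo (0 : ℝ) 1) :
    hTilde q (-1/2) (Real.sqrt (1 - q ^ 2) * x) 1 n / (1 - q ^ 2) ^ ((n : ℝ) / 2)
      = Fq n x q := by
  obtain ⟨hq0, hq1⟩ := hq
  rw [hTilde, Fq, Finset.mul_sum, Finset.sum_div]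
  refine Finset.sum_congr rfl fun k hk => ?_
  have hkn : 2 * k ≤ n := by
    have := Finset.mem_range.mp hk
    omega
  rw [gqPoch_neg_half]
  rw [← key q hq0 hq1 n k hkn]
  ring

lemma fact_shift (m : ℕ) : ∀ r : ℕ, m.factorial * ∏ j ∈ Finset.range r, (m + 1 + j) = (m + r).factorial
  | 0 => by simp
  | r + 1 => by
    rw [Finset.prod_range_succ, ← mul_assoc, fact_shift m r, show m + (r + 1) = (m + r) + 1 from rfl,
      Nat.factorial_succ]
    ring

lemma prod_fact {n k : ℕ} (hk : 2 * k ≤ n) :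
    ((n - 2 * k).factorial : ℝ) * ∏ j ∈ Finset.range (2 * k), ((n - 2 * k + 1 + j : ℕ) : ℝ)
      = (n.factorial : ℝ) := by
  have hnat := fact_shift (n - 2 * k) (2 * k)
  rw [show n - 2 * k + 2 * k = n from by omega] at hnat
  calc ((n - 2 * k).factorial : ℝ) * ∏ j ∈ Finset.range (2 * k), ((n - 2 * k + 1 + j : ℕ) : ℝ)
      = (((n - 2 * k).factorial * ∏ j ∈ Finset.range (2 * k), (n - 2 * k + 1 + j) : ℕ) : ℝ) := by
        push_cast; ring
    _ = _ := by rw [hnat]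

lemma prod_even (k : ℕ) :
    (∏ j ∈ Finset.range k, ((2 * j + 2 : ℕ) : ℝ)) = 2 ^ k * (k.factorial : ℝ) := by
  induction k with
  | zero => simp
  | succ k ih =>
    rw [Finset.prod_range_succ, ih, Nat.factorial_succ]
    push_cast
    ring

lemma Fq_tendsto (x : ℝ) (n : ℕ) :
    Filter.Tendsto (Fq n x) (nhdsWithin 1 (Set.Ioo (0 : ℝ) 1))
      (nhds (hermitePoly n x / 2 ^ n)) := by
  have hval : hermitePoly n x / 2 ^ n
      = ∑ k ∈ Finset.range (n / 2 + 1),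
        (-1 : ℝ) ^ k * (1 : ℝ) ^ (-2 * (n : ℤ) * (k : ℤ) + (k : ℤ) * (2 * (k : ℤ) + 1)) *
          x ^ (n - 2 * k) *
          ((∏ j ∈ Finset.range (2 * k), G (n - 2 * k + 1 + j) 1) /
           ((∏ j ∈ Finset.range k, G (2 * j + 2) 1) * (G 2 1) ^ k)) := by
    rw [hermitePoly, Finset.mul_sum, Finset.sum_div]
    refine Finset.sum_congr rfl fun k hk => ?_
    have hkn : 2 * k ≤ n := by
      have := Finset.mem_range.mp hk; omega
    have hN : (∏ j ∈ Finset.range (2 * k), G (n - 2 * k + 1 + j) 1)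
        = ∏ j ∈ Finset.range (2 * k), ((n - 2 * k + 1 + j : ℕ) : ℝ) :=
      Finset.prod_congr rfl fun j _ => G_one _
    have hD : (∏ j ∈ Finset.range k, G (2 * j + 2) 1)
        = 2 ^ k * (k.factorial : ℝ) := by
      rw [Finset.prod_congr rfl fun j (_ : j ∈ Finset.range k) => G_one (2 * j + 2)]
      exact_mod_cast prod_even k
    have hG21 : G 2 1 = 2 := by norm_num [G_one]
    have hfact1 : ((n - 2 * k).factorial : ℝ) ≠ 0 := Nat.cast_ne_zero.mpr (Nat.factorial_ne_zero _)
    have hfact2 : (k.factorial : ℝ) ≠ 0 := Nat.cast_ne_zero.mpr (Nat.factorial_ne_zero _)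
    have hNreal : (∏ j ∈ Finset.range (2 * k), ((n - 2 * k + 1 + j : ℕ) : ℝ))
        = (n.factorial : ℝ) / ((n - 2 * k).factorial : ℝ) := by
      rw [eq_div_iff hfact1]
      linear_combination prod_fact hkn
    have h2n : (2 : ℝ) ^ n = 2 ^ (n - 2 * k) * 2 ^ k * 2 ^ k := by
      rw [← pow_add, ← pow_add]
      congr 1
      omega
    rw [hN, hNreal, hD, hG21, one_zpow, mul_pow, h2n]
    field_simp
  rw [hval]
  unfold Fq
  refine tendsto_finset_sum _ fun k _ => ?_
  refine Filter.Tendsto.mul (Filter.Tendsto.mul (Filter.Tendsto.mul tendsto_const_nhds ?_)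
    tendsto_const_nhds) (Filter.Tendsto.div ?_ ?_ ?_)
  · exact ((continuousAt_zpow₀ (1 : ℝ) _ (Or.inl one_ne_zero)).tendsto).mono_left
      nhdsWithin_le_nhds
  · exact ((continuous_finset_prod _ fun j _ => G_cont _).continuousAt.tendsto).mono_left
      nhdsWithin_le_nhds
  · exact (((continuous_finset_prod _ fun j _ => G_cont _).mul
      ((G_cont 2).pow k)).continuousAt.tendsto).mono_left nhdsWithin_le_nhds
  · have h1 : (∏ j ∈ Finset.range k, G (2 * j + 2) 1) > 0 :=
      Finset.prod_pos fun j _ => G_pos one_pos (by omega)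
    have h2 : (0:ℝ) < G 2 1 := G_pos one_pos (by omega)
    positivity

theorem hTilde_limit_hermite (x : ℝ) (n : ℕ) :
    Filter.Tendsto
      (fun q : ℝ =>
        hTilde q (-1/2) (Real.sqrt (1 - q ^ 2) * x) 1 n / (1 - q ^ 2) ^ ((n : ℝ) / 2))
      (nhdsWithin 1 (Set.Ioo (0 : ℝ) 1))
      (nhds (hermitePoly n x / 2 ^ n)) := by
  refine Filter.Tendsto.congr' ?_ (Fq_tendsto x n)
  filter_upwards [self_mem_nhdsWithin] with q hq
  exact (eq_on_Ioo x n hq).symm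
end
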